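/- Let 0 < q ≤ p ≤ 2 and α > 0, and set s = α + 1/2 − 1/p. On the set of Besov coefficient sequences θ with ‖θ‖_{b_{p,q}^α} < ∞, the function ρ_{b_{p,q}^α}(θ, θ') = ‖θ − θ'‖_{b_{p,q}^α}^q is a semi-metric of negative type; consequently, the induced kernel κ(θ,θ') = ρ_{b_{p,q}^α}(θ, 0) + ρ_{b_{p,q}^α}(θ', 0) − ρ_{b_{p,q}^α}(θ, θ') (with the zero sequence as base point) is symmetric and positive definite: for every n ≥ 1, all θ₁,…,θₙ and all real c₁,…,cₙ, ∑_{i=1}^n ∑_{j=1}^n c_i c_j κ(θ_i, θ_j) ≥ 0. -/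

import Mathlib

/-
For `0 < β < 1` and `x ≥ 0`, `x ^ β` is a positive multiple of
`∫ u in Ioi 0, (1 - exp (-(x * u))) * u ^ (-1 - β)`. If `K` is conditionally negative definite,
then `exp (-(u • K))` is positive semidefinite for `u ≥ 0` (Schoenberg; via the Schur product
theorem), so the integrand is conditionally negative definite in `x = K i j`, and hence so is
the entrywise power `K ^ β`. Starting from `(x - y) ^ 2`, this makes
`|x - y| ^ p = ((x - y) ^ 2) ^ (p / 2)` (`p ≤ 2`) and then the level kernel
`(∑ k, |x k - y k| ^ p) ^ (q / p)` (`q ≤ p`) of negative type, and `ρ` is a series of such level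
kernels with nonnegative weights. Finally, for a
conditionally negative definite `K` vanishing at `(z₀, z₀)`, testing `K` against
`c - (∑ i, c i) • δ z₀` shows that `K z z₀ + K z' z₀ - K z z'` is positive semidefinite.
-/

/-- Number of coordinates at level index `j`: index `0` encodes the paper's level `−1`
(one coordinate), and index `j ≥ 1` encodes the paper's level `j − 1` (with `2^(j−1)`
coordinates). -/
def levelSize : ℕ → ℕ := fun j => if j = 0 then 1 else 2 ^ (j - 1)

/-- The paper's level corresponding to index `j`, as a real number (so index `0`
gives level `−1`). -/
noncomputable def levelIdx (j : ℕ) : ℝ := (j : ℝ) - 1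

/-- A Besov coefficient sequence `θ = (θ_{j,k})`. -/
abbrev BesovSeq := (j : ℕ) → Fin (levelSize j) → ℝ

/-- The `ℓ_p` norm of the level-`j` block. -/
noncomputable def levelNormP (p : ℝ) {j : ℕ} (v : Fin (levelSize j) → ℝ) : ℝ :=
  (∑ k, |v k| ^ p) ^ (1 / p)

/-- The level-`j` summand `2^{jsq} ‖θ_j‖_p^q` of the `q`-th power of the Besov
sequence norm, where `s = α + 1/2 − 1/p`. -/
noncomputable def besovSummand (p q s : ℝ) (θ : BesovSeq) (j : ℕ) : ℝ :=
  2 ^ (levelIdx j * s * q) * levelNormP p (θ j) ^ q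

/-- The Besov sequence norm `‖θ‖_{b_{p,q}^α} = (∑_{j ≥ −1} 2^{jsq} ‖θ_j‖_p^q)^{1/q}`,
`s = α + 1/2 − 1/p`. -/
noncomputable def besovNorm (p q s : ℝ) (θ : BesovSeq) : ℝ :=
  (∑' j, besovSummand p q s θ j) ^ (1 / q)

/-- The semi-metric `ρ_{b_{p,q}^α}(θ, θ') = ‖θ − θ'‖_{b_{p,q}^α}^q`. -/
noncomputable def besovRho (p q s : ℝ) (θ θ' : BesovSeq) : ℝ :=
  besovNorm p q s (fun j k => θ j k - θ' j k) ^ q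

open Real MeasureTheory Set

lemma Real.add_rpow_le_two_rpow_mul_rpow_add_rpow {a b r : ℝ} (ha : 0 ≤ a) (hb : 0 ≤ b)
    (hr : 0 ≤ r) : (a + b) ^ r ≤ 2 ^ r * (a ^ r + b ^ r) := calc
  (a + b) ^ r ≤ (2 * max a b) ^ r :=
    rpow_le_rpow (add_nonneg ha hb) (by linarith [le_max_left a b, le_max_right a b]) hr
  _ = 2 ^ r * max a b ^ r := mul_rpow zero_le_two (le_max_of_le_left ha)
  _ ≤ 2 ^ r * (a ^ r + b ^ r) := by
    gcongr
    rcases le_total a b with h | h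
    · simpa [max_eq_right h] using rpow_nonneg ha r
    · simpa [max_eq_left h] using rpow_nonneg hb r

lemma integrableOn_one_sub_exp_neg_mul_rpow {β x : ℝ} (hβ0 : 0 < β) (hβ1 : β < 1) (hx : 0 ≤ x) :
    IntegrableOn (fun u => (1 - exp (-(x * u))) * u ^ (-1 - β)) (Ioi 0) := by
  have hmeas : AEStronglyMeasurable (fun u => (1 - exp (-(x * u))) * u ^ (-1 - β))
      (volume.restrict (Ioi 0)) :=
    ContinuousOn.aestronglyMeasurable (by
      refine (continuous_const.sub (by fun_prop)).continuousOn.mul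
        (continuousOn_id.rpow_const fun u hu => Or.inl (ne_of_gt hu))) measurableSet_Ioi
  have hnorm : ∀ u ∈ Ioi (0 : ℝ), ‖(1 - exp (-(x * u))) * u ^ (-1 - β)‖ =
      (1 - exp (-(x * u))) * u ^ (-1 - β) := fun u hu => by
    have : exp (-(x * u)) ≤ 1 := exp_le_one_iff.2 (by nlinarith [mem_Ioi.1 hu])
    exact Real.norm_of_nonneg (mul_nonneg (by linarith) (rpow_nonneg hu.le _))
  rw [← Ioc_union_Ioi_eq_Ioi zero_le_one]
  refine .union (Integrable.mono' (g := fun u => x * u ^ (-β))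
    (((intervalIntegrable_iff_integrableOn_Ioc_of_le zero_le_one).1
      (intervalIntegral.intervalIntegrable_rpow' (by linarith))).const_mul x)
    (hmeas.mono_set Ioc_subset_Ioi_self) ?_) (Integrable.mono' (g := fun u => u ^ (-1 - β))
    (integrableOn_Ioi_rpow_of_lt (by linarith) one_pos)
    (hmeas.mono_set (Ioi_subset_Ioi zero_le_one)) ?_)
  · refine (ae_restrict_iff' measurableSet_Ioc).2 (.of_forall fun u hu => ?_)
    rw [hnorm u hu.1, show x * u ^ (-β) = x * u * u ^ (-1 - β) by
      rw [mul_assoc, ← rpow_one_add' hu.1.le (by linarith)]; ring_nf]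
    exact mul_le_mul_of_nonneg_right (by linarith [add_one_le_exp (-(x * u))])
      (rpow_nonneg hu.1.le _)
  · refine (ae_restrict_iff' measurableSet_Ioi).2 (.of_forall fun u hu => ?_)
    have hu0 : (0 : ℝ) < u := zero_lt_one.trans hu
    rw [hnorm u hu0]
    exact mul_le_of_le_one_left (rpow_nonneg hu0.le _) (by linarith [exp_pos (-(x * u))])

lemma integral_one_sub_exp_neg_mul_rpow {β x : ℝ} (hβ0 : 0 < β) (hx : 0 ≤ x) :
    ∫ u in Ioi 0, (1 - exp (-(x * u))) * u ^ (-1 - β) =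
      x ^ β * ∫ u in Ioi 0, (1 - exp (-u)) * u ^ (-1 - β) := by
  rcases hx.eq_or_lt with rfl | hx
  · simp [zero_rpow hβ0.ne']
  have hscale : ∀ u ∈ Ioi (0 : ℝ), (1 - exp (-(x * u))) * u ^ (-1 - β) =
      x ^ (1 + β) * ((1 - exp (-(x * u))) * (x * u) ^ (-1 - β)) := fun u hu => by
    have hcancel : x ^ (1 + β) * x ^ (-1 - β) = 1 := by rw [← rpow_add hx]; norm_num
    rw [mul_rpow hx.le (le_of_lt hu)]
    linear_combination (-(1 - exp (-(x * u))) * u ^ (-1 - β)) * hcancel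
  rw [setIntegral_congr_fun measurableSet_Ioi hscale, integral_const_mul,
    integral_comp_mul_left_Ioi (fun v => (1 - exp (-v)) * v ^ (-1 - β)) 0 hx, mul_zero,
    smul_eq_mul, ← mul_assoc, ← rpow_neg_one, ← rpow_add hx]
  ring_nf

lemma integral_one_sub_exp_neg_mul_rpow_pos {β : ℝ} (hβ0 : 0 < β) (hβ1 : β < 1) :
    0 < ∫ u in Ioi 0, (1 - exp (-u)) * u ^ (-1 - β) := by
  have hpos : ∀ u ∈ Ioi (0 : ℝ), 0 < (1 - exp (-u)) * u ^ (-1 - β) := fun u hu =>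
    mul_pos (by linarith [exp_lt_one_iff.2 (neg_lt_zero.2 (mem_Ioi.1 hu))]) (rpow_pos_of_pos hu _)
  have hint := integrableOn_one_sub_exp_neg_mul_rpow hβ0 hβ1 zero_le_one
  simp only [one_mul] at hint
  rw [setIntegral_pos_iff_support_of_nonneg_ae
    ((ae_restrict_iff' measurableSet_Ioi).2 (.of_forall fun u hu => (hpos u hu).le)) hint,
    inter_eq_right.2 (show Ioi (0 : ℝ) ⊆ Function.support _ from fun u hu => (hpos u hu).ne')]
  simp

namespace Matrix

variable {ι : Type*} [Fintype ι]

lemma dotProduct_mulVec_self_eq_sum_sum (M : Matrix ι ι ℝ) (c : ι → ℝ) :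
    c ⬝ᵥ M *ᵥ c = ∑ i, ∑ j, c i * c j * M i j := by
  simp only [dotProduct, mulVec, Finset.mul_sum]
  exact Finset.sum_congr rfl fun i _ => Finset.sum_congr rfl fun j _ => by ring

lemma PosSemidef.sum_sum_nonneg {M : Matrix ι ι ℝ} (hM : M.PosSemidef) (c : ι → ℝ) :
    0 ≤ ∑ i, ∑ j, c i * c j * M i j := by
  simpa [dotProduct_mulVec_self_eq_sum_sum] using hM.dotProduct_mulVec_nonneg c

lemma posSemidef_of_sum_sum_nonneg {M : Matrix ι ι ℝ} (hM : M.IsSymm)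
    (h : ∀ c : ι → ℝ, 0 ≤ ∑ i, ∑ j, c i * c j * M i j) : M.PosSemidef :=
  .of_dotProduct_mulVec_nonneg (isHermitian_iff_isSymm.mpr hM)
    fun c => by simpa [dotProduct_mulVec_self_eq_sum_sum] using h c

lemma PosSemidef.map_pow {G : Matrix ι ι ℝ} (hG : G.PosSemidef) (N : ℕ) :
    (G.map (· ^ N)).PosSemidef := by
  induction N with
  | zero =>
    convert posSemidef_vecMulVec_self_star (fun _ : ι => (1 : ℝ)) using 1
    ext i j; simp [vecMulVec_apply]
  | succ N ih =>
    have hsucc : G.map (· ^ (N + 1)) = G.map (· ^ N) ⊙ G := by ext; simp [pow_succ]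
    exact hsucc ▸ ih.hadamard hG

lemma PosSemidef.map_exp {G : Matrix ι ι ℝ} (hG : G.PosSemidef) :
    (G.map Real.exp).PosSemidef := by
  refine posSemidef_of_sum_sum_nonneg ((isHermitian_iff_isSymm.mp hG.isHermitian).map _)
    fun c => ?_
  have hsum : HasSum (fun N : ℕ => (N.factorial : ℝ)⁻¹ * ∑ i, ∑ j, c i * c j * G i j ^ N)
      (∑ i, ∑ j, c i * c j * G.map Real.exp i j) := by
    simp only [Finset.mul_sum]
    refine hasSum_sum fun i _ => hasSum_sum fun j _ => ?_
    have := (NormedSpace.expSeries_div_hasSum_exp (G i j)).mul_left (c i * c j)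
    simpa [Real.exp_eq_exp_ℝ, div_eq_inv_mul, mul_left_comm] using this
  exact hsum.nonneg fun N => mul_nonneg (by positivity) ((hG.map_pow N).sum_sum_nonneg c)

/-- A semi-metric `ρ` is of negative type iff every matrix `ρ (z i) (z j)` is conditionally
negative definite. -/
def CondNegDef (K : Matrix ι ι ℝ) : Prop :=
  ∀ a : ι → ℝ, ∑ i, a i = 0 → ∑ i, ∑ j, a i * a j * K i j ≤ 0

lemma CondNegDef.smul {K : Matrix ι ι ℝ} (hK : K.CondNegDef) {c : ℝ} (hc : 0 ≤ c) :
    (c • K).CondNegDef := fun a ha => by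
  have hc' : ∑ i, ∑ j, a i * a j * (c • K) i j = c * ∑ i, ∑ j, a i * a j * K i j := by
    simp only [Finset.mul_sum, smul_apply, smul_eq_mul]
    exact Finset.sum_congr rfl fun i _ => Finset.sum_congr rfl fun j _ => by ring
  rw [hc']
  exact mul_nonpos_of_nonneg_of_nonpos hc (hK a ha)

lemma condNegDef_of_hasSum {β : Type*} {F : β → Matrix ι ι ℝ} {K : Matrix ι ι ℝ}
    (hF : ∀ b, (F b).CondNegDef) (hK : ∀ i j, HasSum (fun b => F b i j) (K i j)) :
    K.CondNegDef := fun a ha => by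
  have hsum : HasSum (fun b => ∑ i, ∑ j, a i * a j * F b i j) (∑ i, ∑ j, a i * a j * K i j) :=
    hasSum_sum fun i _ => hasSum_sum fun j _ => (hK i j).mul_left _
  exact hsum.nonpos fun b => hF b a ha

lemma condNegDef_integral {Ω : Type*} [MeasurableSpace Ω] {μ : Measure Ω}
    {F : Ω → Matrix ι ι ℝ} (hF : ∀ᵐ u ∂μ, (F u).CondNegDef)
    (hint : ∀ i j, Integrable (fun u => F u i j) μ) :
    (Matrix.of fun i j => ∫ u, F u i j ∂μ).CondNegDef := fun a ha => by
  have hswap : ∑ i, ∑ j, a i * a j * (∫ u, F u i j ∂μ) =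
      ∫ u, ∑ i, ∑ j, a i * a j * F u i j ∂μ := by
    rw [integral_finsetSum _ fun i _ => integrable_finsetSum _ fun j _ => (hint i j).const_mul _]
    refine Finset.sum_congr rfl fun i _ => ?_
    rw [integral_finsetSum _ fun j _ => (hint i j).const_mul _]
    simp only [integral_const_mul]
  simp only [of_apply]
  rw [hswap]
  exact integral_nonpos_of_ae (hF.mono fun u hu => hu a ha)

lemma condNegDef_one_sub_of_posSemidef {E : Matrix ι ι ℝ} (hE : E.PosSemidef) :
    (Matrix.of fun i j => 1 - E i j).CondNegDef := fun a ha => by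
  have hexpand : ∑ i, ∑ j, a i * a j * (1 - E i j) =
      (∑ i, a i) * (∑ j, a j) - ∑ i, ∑ j, a i * a j * E i j := by
    rw [Finset.sum_mul_sum, ← Finset.sum_sub_distrib]
    refine Finset.sum_congr rfl fun i _ => ?_
    rw [← Finset.sum_sub_distrib]
    exact Finset.sum_congr rfl fun j _ => by ring
  simp only [of_apply]
  rw [hexpand, ha, zero_mul, zero_sub, neg_nonpos]
  exact hE.sum_sum_nonneg a

lemma condNegDef_sq_sub (x : ι → ℝ) : (Matrix.of fun i j => (x i - x j) ^ 2).CondNegDef :=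
  fun a ha => by
  have hexpand : ∑ i, ∑ j, a i * a j * (x i - x j) ^ 2 =
      2 * (∑ i, a i) * (∑ i, a i * x i ^ 2) - 2 * (∑ i, a i * x i) ^ 2 := by
    have hterm : ∀ i j, a i * a j * (x i - x j) ^ 2 =
        a i * x i ^ 2 * a j + a i * (a j * x j ^ 2) - 2 * (a i * x i) * (a j * x j) :=
      fun i j => by ring
    simp only [hterm, Finset.sum_add_distrib, Finset.sum_sub_distrib, ← Finset.mul_sum,
      ← Finset.sum_mul]
    ring
  simp only [of_apply]
  rw [hexpand, ha]
  nlinarith [sq_nonneg (∑ i, a i * x i)]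

lemma CondNegDef.posSemidef_kernel {K : Matrix ι ι ℝ} (hK : K.CondNegDef) (hsymm : K.IsSymm)
    (i₀ : ι) (hi₀ : K i₀ i₀ = 0) :
    (Matrix.of fun i j => K i i₀ + K j i₀ - K i j).PosSemidef := by
  classical
  refine posSemidef_of_sum_sum_nonneg (by ext i j; simp [hsymm.apply i j]; ring) fun c => ?_
  set S := ∑ i, c i
  set a : ι → ℝ := fun i => c i - if i = i₀ then S else 0
  have ha : ∑ i, a i = 0 := by simp [a, Finset.sum_sub_distrib, S]
  have hKa : ∑ i, ∑ j, a i * a j * K i j =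
      ∑ i, ∑ j, c i * c j * K i j - 2 * S * ∑ i, c i * K i i₀ := by
    simp only [a, sub_mul, mul_sub, ite_mul, mul_ite, zero_mul, mul_zero, Finset.sum_sub_distrib,
      Finset.sum_ite_irrel, Finset.sum_const_zero, Finset.sum_ite_eq', Finset.mem_univ, if_true,
      hi₀, hsymm.apply i₀, Finset.mul_sum]
    rw [sub_zero, sub_sub, ← Finset.sum_add_distrib]
    exact congrArg _ (Finset.sum_congr rfl fun i _ => by ring)
  have hKc : ∑ i, ∑ j, c i * c j * (Matrix.of fun i j => K i i₀ + K j i₀ - K i j) i j =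
      2 * S * ∑ i, c i * K i i₀ - ∑ i, ∑ j, c i * c j * K i j := by
    have hterm : ∀ i j, c i * c j * (K i i₀ + K j i₀ - K i j) =
        c i * K i i₀ * c j + c i * (c j * K j i₀) - c i * c j * K i j := fun i j => by ring
    simp only [of_apply, hterm, Finset.sum_add_distrib, Finset.sum_sub_distrib, ← Finset.mul_sum,
      ← Finset.sum_mul]
    ring
  linarith [hK a ha]

lemma CondNegDef.posSemidef_exp_neg {K : Matrix ι ι ℝ} (hK : K.CondNegDef) (hsymm : K.IsSymm)
    (hdiag : ∀ i, K i i = 0) {t : ℝ} (ht : 0 ≤ t) :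
    (K.map fun x => Real.exp (-(t * x))).PosSemidef := by
  classical
  rcases isEmpty_or_nonempty ι with hι | ⟨⟨i₀⟩⟩
  · exact Subsingleton.elim (0 : Matrix ι ι ℝ) (K.map _) ▸ PosSemidef.zero
  -- `exp (-(t • K)) = D * exp (G) * D` with `G` the kernel of `t • K` at `i₀`
  -- and `D = diagonal (exp (-(t * K · i₀)))`
  have hG := ((hK.smul ht).posSemidef_kernel (hsymm.smul t) i₀ (by simp [hdiag])).map_exp
  convert hG.mul_mul_conjTranspose_same (diagonal fun i => Real.exp (-(t * K i i₀))) using 1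
  ext i j
  simp only [map_apply, diagonal_conjTranspose, mul_diagonal, diagonal_mul, of_apply, smul_apply,
    smul_eq_mul, star_trivial, ← Real.exp_add]
  congr 1
  ring

lemma CondNegDef.map_rpow {K : Matrix ι ι ℝ} (hK : K.CondNegDef) (hsymm : K.IsSymm)
    (hdiag : ∀ i, K i i = 0) (hnonneg : ∀ i j, 0 ≤ K i j) {β : ℝ} (hβ0 : 0 < β) (hβ1 : β ≤ 1) :
    (K.map (· ^ β)).CondNegDef := by
  rcases hβ1.lt_or_eq with hβ1 | rfl
  swap
  · simpa using hK
  set C := ∫ u in Ioi 0, (1 - exp (-u)) * u ^ (-1 - β)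
  have hC := integral_one_sub_exp_neg_mul_rpow_pos hβ0 hβ1
  have hrep : K.map (· ^ β) = C⁻¹ •
      Matrix.of fun i j => ∫ u in Ioi 0, (1 - exp (-(K i j * u))) * u ^ (-1 - β) := by
    ext i j
    rw [smul_apply, of_apply, integral_one_sub_exp_neg_mul_rpow hβ0 (hnonneg i j), map_apply,
      smul_eq_mul, mul_left_comm, inv_mul_cancel₀ hC.ne', mul_one]
  rw [hrep]
  refine (condNegDef_integral ?_ fun i j =>
    integrableOn_one_sub_exp_neg_mul_rpow hβ0 hβ1 (hnonneg i j)).smul (inv_nonneg.2 hC.le)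
  refine (ae_restrict_iff' measurableSet_Ioi).2 (.of_forall fun u hu => ?_)
  show (Matrix.of fun i j => (1 - exp (-(K i j * u))) * u ^ (-1 - β)).CondNegDef
  convert (condNegDef_one_sub_of_posSemidef (hK.posSemidef_exp_neg hsymm hdiag hu.le)).smul
    (rpow_nonneg (le_of_lt hu) (-1 - β)) using 2
  ext i j
  simp only [of_apply, smul_apply, map_apply, smul_eq_mul, mul_comm u]
  ring

lemma condNegDef_rpow_sum_abs_sub_rpow {ι κ : Type*} [Fintype ι] [Fintype κ] (v : ι → κ → ℝ)
    {p β : ℝ} (hp0 : 0 < p) (hp2 : p ≤ 2) (hβ0 : 0 < β) (hβ1 : β ≤ 1) :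
    (Matrix.of fun i j => (∑ k, |v i k - v j k| ^ p) ^ β).CondNegDef := by
  have hcoord : ∀ k, (Matrix.of fun i j => |v i k - v j k| ^ p).CondNegDef := fun k => by
    have h := (condNegDef_sq_sub (v · k)).map_rpow (.ext fun i j => by simp [sub_sq_comm])
      (fun i => by simp) (fun i j => sq_nonneg _) (half_pos hp0) (by linarith)
    convert h using 2
    ext i j
    rw [map_apply, of_apply, of_apply, ← sq_abs, ← rpow_natCast, ← rpow_mul (abs_nonneg _)]
    ring_nf
  have hsum : (Matrix.of fun i j => ∑ k, |v i k - v j k| ^ p).CondNegDef :=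
    condNegDef_of_hasSum hcoord fun i j => hasSum_fintype _
  exact hsum.map_rpow (.ext fun i j => by simp [abs_sub_comm]) (fun i => by simp [hp0.ne'])
    (fun i j => Finset.sum_nonneg fun k _ => by positivity) hβ0 hβ1

end Matrix

section Besov

open Matrix

variable {p q s : ℝ}

lemma besovSummand_eq (θ : BesovSeq) (j : ℕ) :
    besovSummand p q s θ j = 2 ^ (levelIdx j * s * q) * (∑ k, |θ j k| ^ p) ^ (q / p) := by
  rw [besovSummand, levelNormP, ← rpow_mul (by positivity), one_div_mul_eq_div]

lemma besovSummand_nonneg (θ : BesovSeq) (j : ℕ) : 0 ≤ besovSummand p q s θ j := by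
  rw [besovSummand_eq]; positivity

lemma besovSummand_zero (hp : p ≠ 0) (hq : q ≠ 0) : besovSummand p q s 0 = 0 := by
  ext j
  simp [besovSummand_eq, zero_rpow hp, zero_rpow (div_ne_zero hq hp)]

lemma besovRho_eq_tsum (hq : q ≠ 0) (θ θ' : BesovSeq) :
    besovRho p q s θ θ' = ∑' j, besovSummand p q s (θ - θ') j := by
  rw [besovRho, besovNorm, ← rpow_mul (tsum_nonneg (besovSummand_nonneg _)), one_div,
    inv_mul_cancel₀ hq, rpow_one]
  rfl

lemma besovRho_comm (θ θ' : BesovSeq) : besovRho p q s θ θ' = besovRho p q s θ' θ := by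
  simp only [besovRho, besovNorm, besovSummand_eq, abs_sub_comm]

lemma besovRho_nonneg (θ θ' : BesovSeq) : 0 ≤ besovRho p q s θ θ' :=
  rpow_nonneg (rpow_nonneg (tsum_nonneg (besovSummand_nonneg _)) _) _

lemma besovRho_self (hp : p ≠ 0) (hq : q ≠ 0) (θ : BesovSeq) : besovRho p q s θ θ = 0 := by
  simp [besovRho_eq_tsum hq, besovSummand_zero hp hq]

lemma summable_besovSummand_sub (hp : 0 < p) (hq : 0 ≤ q) {θ θ' : BesovSeq}
    (hθ : Summable (besovSummand p q s θ)) (hθ' : Summable (besovSummand p q s θ')) :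
    Summable (besovSummand p q s (θ - θ')) := by
  refine .of_nonneg_of_le (besovSummand_nonneg _) (fun j => ?_)
    ((hθ.add hθ').mul_left (2 ^ q * 2 ^ (q / p)))
  have hlevel : ∑ k, |θ j k - θ' j k| ^ p ≤ 2 ^ p * (∑ k, |θ j k| ^ p + ∑ k, |θ' j k| ^ p) := by
    rw [← Finset.sum_add_distrib, Finset.mul_sum]
    exact Finset.sum_le_sum fun k _ => (rpow_le_rpow (abs_nonneg _) (abs_sub _ _) hp.le).trans
      (add_rpow_le_two_rpow_mul_rpow_add_rpow (abs_nonneg _) (abs_nonneg _) hp.le)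
  have hqp : 0 ≤ q / p := div_nonneg hq hp.le
  simp only [besovSummand_eq, Pi.sub_apply]
  calc 2 ^ (levelIdx j * s * q) * (∑ k, |θ j k - θ' j k| ^ p) ^ (q / p)
      ≤ 2 ^ (levelIdx j * s * q) * (2 ^ p * (∑ k, |θ j k| ^ p + ∑ k, |θ' j k| ^ p)) ^ (q / p) := by
        gcongr
    _ = 2 ^ q * 2 ^ (levelIdx j * s * q) * (∑ k, |θ j k| ^ p + ∑ k, |θ' j k| ^ p) ^ (q / p) := by
        rw [mul_rpow (by positivity) (by positivity), ← rpow_mul zero_le_two,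
          mul_div_cancel₀ _ hp.ne']
        ring
    _ ≤ _ := by
        grw [add_rpow_le_two_rpow_mul_rpow_add_rpow (by positivity) (by positivity) hqp]
        exact le_of_eq (by ring)

lemma besovRho_condNegDef {ι : Type*} [Fintype ι] (hq : 0 < q) (hqp : q ≤ p) (hp2 : p ≤ 2)
    (θ : ι → BesovSeq) (hθ : ∀ i, Summable (besovSummand p q s (θ i))) :
    (Matrix.of fun i j => besovRho p q s (θ i) (θ j)).CondNegDef := by
  have hp : 0 < p := hq.trans_le hqp
  refine condNegDef_of_hasSum (fun j => (condNegDef_rpow_sum_abs_sub_rpow (θ · j) hp hp2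
    (div_pos hq hp) ((div_le_one hp).2 hqp)).smul (rpow_nonneg zero_le_two (levelIdx j * s * q)))
    fun i i' => ?_
  rw [Matrix.of_apply, besovRho_eq_tsum hq.ne']
  convert (summable_besovSummand_sub hp hq.le (hθ i) (hθ i')).hasSum using 1
  ext j
  simp [besovSummand_eq]

end Besov

theorem besov_rho_negtype_and_kernel_posdef_general (p q : ℝ)
    (hq : 0 < q) (hqp : q ≤ p) (hp2 : p ≤ 2) (s : ℝ) :
    -- semi-metric properties
    (∀ θ θ' : BesovSeq, besovRho p q s θ θ' = besovRho p q s θ' θ) ∧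
    (∀ θ θ' : BesovSeq, 0 ≤ besovRho p q s θ θ') ∧
    (∀ θ : BesovSeq, besovRho p q s θ θ = 0) ∧
    -- negative type on sequences of finite Besov norm
    (∀ (n : ℕ), 2 ≤ n → ∀ (θ : Fin n → BesovSeq),
      (∀ i, Summable (besovSummand p q s (θ i))) →
      ∀ (a : Fin n → ℝ), (∑ i, a i) = 0 →
        ∑ i, ∑ j, a i * a j * besovRho p q s (θ i) (θ j) ≤ 0) ∧
    -- induced kernel (base point: the zero sequence) is symmetric
    (∀ θ θ' : BesovSeq,
      besovRho p q s θ 0 + besovRho p q s θ' 0 - besovRho p q s θ θ' =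
      besovRho p q s θ' 0 + besovRho p q s θ 0 - besovRho p q s θ' θ) ∧
    -- and positive definite on sequences of finite Besov norm
    (∀ (n : ℕ), 1 ≤ n → ∀ (θ : Fin n → BesovSeq),
      (∀ i, Summable (besovSummand p q s (θ i))) →
      ∀ (c : Fin n → ℝ),
        0 ≤ ∑ i, ∑ j, c i * c j *
          (besovRho p q s (θ i) 0 + besovRho p q s (θ j) 0 -
            besovRho p q s (θ i) (θ j))) := by
  have hp : 0 < p := hq.trans_le hqp
  refine ⟨besovRho_comm, besovRho_nonneg, besovRho_self hp.ne' hq.ne',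
    fun n _ θ hθ => besovRho_condNegDef hq hqp hp2 θ hθ,
    fun θ θ' => by rw [besovRho_comm θ θ']; ring, fun n _ θ hθ c => ?_⟩
  have hθ₀ : ∀ i, Summable (besovSummand p q s (Matrix.vecCons 0 θ i)) :=
    Fin.cases (by rw [Matrix.cons_val_zero, besovSummand_zero hp.ne' hq.ne']; exact summable_zero)
      hθ
  have hkernel := (besovRho_condNegDef hq hqp hp2 _ hθ₀).posSemidef_kernel
    (.ext fun _ _ => besovRho_comm _ _) 0 (besovRho_self hp.ne' hq.ne' _)
  simpa using (hkernel.submatrix Fin.succ).sum_sum_nonneg c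

/-- For `0 < q ≤ p ≤ 2` and `α > 0`, on the set of Besov coefficient
sequences with finite `b_{p,q}^α` norm, the function `ρ(θ,θ') = ‖θ − θ'‖_{b_{p,q}^α}^q`
is a semi-metric of negative type; consequently the induced kernel
`κ(θ,θ') = ρ(θ,0) + ρ(θ',0) − ρ(θ,θ')` is symmetric and positive definite. -/
theorem besov_rho_negtype_and_kernel_posdef (p q α : ℝ)
    (hq : 0 < q) (hqp : q ≤ p) (hp2 : p ≤ 2) (hα : 0 < α) (s : ℝ)
    (hs : s = α + 1 / 2 - 1 / p) :
    -- semi-metric properties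
    (∀ θ θ' : BesovSeq, besovRho p q s θ θ' = besovRho p q s θ' θ) ∧
    (∀ θ θ' : BesovSeq, 0 ≤ besovRho p q s θ θ') ∧
    (∀ θ : BesovSeq, besovRho p q s θ θ = 0) ∧
    -- negative type on sequences of finite Besov norm
    (∀ (n : ℕ), 2 ≤ n → ∀ (θ : Fin n → BesovSeq),
      (∀ i, Summable (besovSummand p q s (θ i))) →
      ∀ (a : Fin n → ℝ), (∑ i, a i) = 0 →
        ∑ i, ∑ j, a i * a j * besovRho p q s (θ i) (θ j) ≤ 0) ∧
    -- induced kernel (base point: the zero sequence) is symmetric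
    (∀ θ θ' : BesovSeq,
      besovRho p q s θ 0 + besovRho p q s θ' 0 - besovRho p q s θ θ' =
      besovRho p q s θ' 0 + besovRho p q s θ 0 - besovRho p q s θ' θ) ∧
    -- and positive definite on sequences of finite Besov norm
    (∀ (n : ℕ), 1 ≤ n → ∀ (θ : Fin n → BesovSeq),
      (∀ i, Summable (besovSummand p q s (θ i))) →
      ∀ (c : Fin n → ℝ),
        0 ≤ ∑ i, ∑ j, c i * c j *
          (besovRho p q s (θ i) 0 + besovRho p q s (θ j) 0 -
            besovRho p q s (θ i) (θ j))) :=
  besov_rho_negtype_and_kernel_posdef_general p q hq hqp hp2 s
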